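/- arXiv:2201.00338 — 2 statements merged into one kernel-verified Lean document; each statement's English description precedes it below -/
import Mathlib

section
/- Let X, H, Y be separable real Hilbert spaces, W : X → H and A : H → Y bounded linear, R : X → [0,∞] proper, convex and weakly lower semicontinuous, (φ_λ)_{λ∈Λ} an orthonormal basis of H with countable Λ, and weights κ_λ ≥ a > 0. Suppose (x⋆, h⋆, y⋆) satisfies W x⋆ = h⋆ and A h⋆ = y⋆, there exist u ∈ H with W*u ∈ ∂R(x⋆) and v ∈ Y with η := A*v − u ∈ ∂‖h⋆‖_{1,κ}, and the restriction A_{Ω[η]} of A to H_{Ω[η]} := span{φ_λ : λ ∈ Ω[η]} is injective, where Ω[η] := {λ : |⟨φ_λ, η⟩| = κ_λ}. Let C > 0 and take α = Cδ. Then for every δ > 0, every yδ ∈ Y with ‖yδ − y⋆‖ ≤ δ, and every minimizer (xαδ, hαδ) of B_{α,yδ}(x,h) := ½‖W x − h‖² + ½‖A h − yδ‖² + α(R(x) + ‖h‖_{1,κ}), one has ‖hαδ − h⋆‖ ≤ d δ with d := 2‖A_{Ω[η]}⁻¹‖(1 + C‖(u,v)‖) + ((1 + ‖A_{Ω[η]}⁻¹‖‖A‖)/m[η])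 · (1 + C‖(u,v)‖)²/(2C), where m[η] := inf{κ_λ − |⟨φ_λ, η⟩| : λ ∉ Ω[η]} and ‖(u,v)‖ := (‖u‖² + ‖v‖²)^{1/2}. -/
/-!
Comparing the minimizer with `(x⋆, h⋆)` and inserting the source condition turns the minimality
of `B_{α,yδ}` into a quadratic inequality; completing the squares bounds the residual
`‖A hαδ - y⋆‖` by `O(δ)` and the Bregman distance `D` of `‖·‖_{1,κ}` between `hαδ` and `h⋆` by
`O(δ)`. This distance is `Σ_λ (κ_λ |⟪φ_λ, hαδ⟫| - ⟪φ_λ, η⟫ ⟪φ_λ, hαδ⟫)`, whose terms off the finite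
active set `Ω[η]` dominate `m[η] |⟪φ_λ, hαδ⟫|`, while `h⋆` has no coordinates off `Ω[η]`. Hence the
part of `hαδ - h⋆` off `Ω[η]` has norm at most `D / m[η]`, and the part in `span φ(Ω[η])` is
controlled by the residual through the restricted inverse of `A`.
-/

open scoped ENNReal InnerProductSpace
open Filter

noncomputable section

/-- `ξ` is a subgradient of the extended-real-valued functional `Q` at `xs`. -/
def IsSubgrad {X : Type*} [NormedAddCommGroup X] [InnerProductSpace ℝ X]
    (Q : X → ℝ≥0∞) (xs ξ : X) : Prop :=
  ∀ x, (Q xs : EReal) + ((⟪ξ, x - xs⟫_ℝ : ℝ) : EReal) ≤ (Q x : EReal)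

/-- Convexity of an extended-real-valued functional. -/
def ConvexE {X : Type*} [AddCommGroup X] [Module ℝ X] (Q : X → ℝ≥0∞) : Prop :=
  ∀ x y : X, ∀ t : ℝ, 0 ≤ t → t ≤ 1 →
    Q (t • x + (1 - t) • y) ≤ ENNReal.ofReal t * Q x + ENNReal.ofReal (1 - t) * Q y

/-- Weak (sequential) lower semicontinuity of an extended-real-valued functional. -/
def WeakLSC {X : Type*} [NormedAddCommGroup X] [NormedSpace ℝ X] (Q : X → ℝ≥0∞) : Prop :=
  ∀ (x : X) (u : ℕ → X),
    (∀ f : X →L[ℝ] ℝ, Tendsto (fun n => f (u n)) atTop (nhds (f x))) →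
    (Q x : EReal) ≤ liminf (fun n => ((Q (u n) : ℝ≥0∞) : EReal)) atTop

/-- The weighted ℓ¹-norm `‖h‖_{1,κ} = Σ_λ κ_λ |⟪φ_λ, h⟫|`. -/
def WNorm1 {H : Type*} [NormedAddCommGroup H] [InnerProductSpace ℝ H] {Λ : Type*}
    (φ : HilbertBasis Λ ℝ H) (κ : Λ → ℝ) (h : H) : ℝ≥0∞ :=
  ∑' l, ENNReal.ofReal (κ l * |⟪φ l, h⟫_ℝ|)

theorem mul_le_mul_abs_of_abs_le {x y k : ℝ} (h : |x| ≤ k) : x * y ≤ k * |y| :=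
  calc x * y ≤ |x * y| := le_abs_self _
    _ = |x| * |y| := abs_mul x y
    _ ≤ k * |y| := mul_le_mul_of_nonneg_right h (abs_nonneg y)

theorem toReal_add_mul_le_of_ofReal_add_mul_le {a b α : ℝ} {e₁ e₂ : ℝ≥0∞} (ha : 0 ≤ a)
    (hb : 0 ≤ b) (hα : 0 < α) (he₂ : e₂ ≠ ⊤)
    (h : ENNReal.ofReal a + ENNReal.ofReal α * e₁ ≤ ENNReal.ofReal b + ENNReal.ofReal α * e₂) :
    e₁ ≠ ⊤ ∧ a + α * e₁.toReal ≤ b + α * e₂.toReal := by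
  have he₁ : e₁ ≠ ⊤ := by
    rintro rfl
    rw [ENNReal.mul_top (ENNReal.ofReal_pos.2 hα).ne', add_top, top_le_iff] at h
    exact ENNReal.add_ne_top.2 ⟨ENNReal.ofReal_ne_top,
      ENNReal.mul_ne_top ENNReal.ofReal_ne_top he₂⟩ h
  refine ⟨he₁, ?_⟩
  rwa [← ENNReal.ofReal_toReal he₁, ← ENNReal.ofReal_toReal he₂, ← ENNReal.ofReal_mul hα.le,
    ← ENNReal.ofReal_mul hα.le, ← ENNReal.ofReal_add ha (by positivity),
    ← ENNReal.ofReal_add hb (by positivity), ENNReal.ofReal_le_ofReal_iff (by positivity)] at h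

theorem quadratic_source_bound {p q δ α D a b : ℝ} (hα : 0 ≤ α) (hδ : 0 ≤ δ) (hD : 0 ≤ D)
    (h : p ^ 2 / 2 + q ^ 2 / 2 + α * D ≤ δ ^ 2 / 2 + α * a * p + α * b * (q + δ)) :
    α * D ≤ (δ + α * √(a ^ 2 + b ^ 2)) ^ 2 / 2 ∧ q + δ ≤ 2 * (δ + α * √(a ^ 2 + b ^ 2)) := by
  set s := √(a ^ 2 + b ^ 2)
  have hs : s ^ 2 = a ^ 2 + b ^ 2 := Real.sq_sqrt (by positivity)
  have hbs : α * b ≤ α * s :=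
    mul_le_mul_of_nonneg_left (Real.le_sqrt_of_sq_le (by nlinarith)) hα
  have hsquares : (p - α * a) ^ 2 / 2 + (q - α * b) ^ 2 / 2 + α * D ≤ (δ + α * s) ^ 2 / 2 := by
    linear_combination h + mul_le_mul_of_nonneg_left hbs hδ - α ^ 2 / 2 * hs
  have hq : q - α * b ≤ δ + α * s :=
    le_of_sq_le_sq (by nlinarith [sq_nonneg (p - α * a), mul_nonneg hα hD]) (by positivity)
  exact ⟨by nlinarith [sq_nonneg (p - α * a), sq_nonneg (q - α * b)], by linarith⟩

namespace IsSubgrad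

variable {X : Type*} [NormedAddCommGroup X] [InnerProductSpace ℝ X] {Q : X → ℝ≥0∞} {xs ξ x : X}

theorem ne_top (hξ : IsSubgrad Q xs ξ) (hx : Q x ≠ ⊤) : Q xs ≠ ⊤ := by
  intro htop
  have h := hξ x
  rw [htop, EReal.coe_ennreal_top, EReal.top_add_coe, top_le_iff,
    EReal.coe_ennreal_eq_top_iff] at h
  exact hx h

theorem toReal_add_inner_le (hξ : IsSubgrad Q xs ξ) (hxs : Q xs ≠ ⊤) (hx : Q x ≠ ⊤) :
    (Q xs).toReal + ⟪ξ, x - xs⟫_ℝ ≤ (Q x).toReal := by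
  have h := hξ x
  rwa [← EReal.coe_ennreal_toReal hxs, ← EReal.coe_ennreal_toReal hx, ← EReal.coe_add,
    EReal.coe_le_coe_iff] at h

end IsSubgrad

/-- The functional `B_{α,yδ}` of the paper, with the penalty `‖·‖_{1,κ}` replaced by any `N`. -/
def relaxedFunctional {X H Y : Type*} [NormedAddCommGroup X] [NormedSpace ℝ X]
    [NormedAddCommGroup H] [NormedSpace ℝ H] [NormedAddCommGroup Y] [NormedSpace ℝ Y]
    (W : X →L[ℝ] H) (A : H →L[ℝ] Y) (R : X → ℝ≥0∞) (N : H → ℝ≥0∞) (α : ℝ) (yδ : Y)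
    (x : X) (h : H) : ℝ≥0∞ :=
  ENNReal.ofReal (‖W x - h‖ ^ 2 / 2) + ENNReal.ofReal (‖A h - yδ‖ ^ 2 / 2) +
    ENNReal.ofReal α * (R x + N h)

section RelaxedFunctional

variable {X H Y : Type*} [NormedAddCommGroup X] [InnerProductSpace ℝ X] [CompleteSpace X]
  [NormedAddCommGroup H] [InnerProductSpace ℝ H] [CompleteSpace H]
  [NormedAddCommGroup Y] [InnerProductSpace ℝ Y] [CompleteSpace Y]
  (W : X →L[ℝ] H) (A : H →L[ℝ] Y) (R : X → ℝ≥0∞) (N : H → ℝ≥0∞)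
  {xs : X} {hs : H} {ys : Y} {u : H} {v : Y} {η : H} {α δ : ℝ} {yδ : Y} {xad : X} {had : H}

theorem relaxedFunctional_variational_ineq (hWx : W xs = hs) (hAh : A hs = ys)
    (hη : η = ContinuousLinearMap.adjoint A v - u)
    (hu : IsSubgrad R xs (ContinuousLinearMap.adjoint W u))
    (hRs : R xs ≠ ⊤) (hNs : N hs ≠ ⊤) (hα : 0 < α) (hdata : ‖yδ - ys‖ ≤ δ)
    (hmin : relaxedFunctional W A R N α yδ xad had ≤ relaxedFunctional W A R N α yδ xs hs) :
    N had ≠ ⊤ ∧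
      ‖W xad - had‖ ^ 2 / 2 + ‖A had - yδ‖ ^ 2 / 2 +
          α * ((N had).toReal - (N hs).toReal - ⟪η, had - hs⟫_ℝ) ≤
        δ ^ 2 / 2 + α * ‖u‖ * ‖W xad - had‖ + α * ‖v‖ * (‖A had - yδ‖ + δ) := by
  simp only [relaxedFunctional, hWx, hAh, sub_self, norm_zero, ne_eq, OfNat.ofNat_ne_zero,
    not_false_eq_true, zero_pow, zero_div, ENNReal.ofReal_zero, zero_add] at hmin
  rw [← ENNReal.ofReal_add (by positivity) (by positivity)] at hmin
  obtain ⟨hfin, henergy⟩ := toReal_add_mul_le_of_ofReal_add_mul_le (by positivity)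
    (by positivity) hα (ENNReal.add_ne_top.2 ⟨hRs, hNs⟩) hmin
  obtain ⟨hRad, hNad⟩ := ENNReal.add_ne_top.1 hfin
  rw [ENNReal.toReal_add hRad hNad, ENNReal.toReal_add hRs hNs] at henergy
  have hR := hu.toReal_add_inner_le hRs hRad
  have hpair : ⟪ContinuousLinearMap.adjoint W u, xad - xs⟫_ℝ + ⟪η, had - hs⟫_ℝ =
      ⟪u, W xad - had⟫_ℝ + ⟪v, A had - ys⟫_ℝ := by
    rw [hη, inner_sub_left, ContinuousLinearMap.adjoint_inner_left,
      ContinuousLinearMap.adjoint_inner_left, map_sub, map_sub, hWx, hAh]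
    simp only [inner_sub_right]
    ring
  have hcsu : -⟪u, W xad - had⟫_ℝ ≤ ‖u‖ * ‖W xad - had‖ :=
    (neg_le_abs _).trans (abs_real_inner_le_norm _ _)
  have hcsv : -⟪v, A had - ys⟫_ℝ ≤ ‖v‖ * (‖A had - yδ‖ + δ) :=
    (neg_le_abs _).trans <| (abs_real_inner_le_norm _ _).trans <|
      mul_le_mul_of_nonneg_left ((norm_sub_le_norm_sub_add_norm_sub _ yδ _).trans
        (by gcongr)) (norm_nonneg v)
  have hdata' : ‖ys - yδ‖ ^ 2 / 2 ≤ δ ^ 2 / 2 := by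
    rw [norm_sub_rev] at hdata
    gcongr
  refine ⟨hNad, ?_⟩
  linear_combination henergy + α * hR - α * hpair + α * hcsu + α * hcsv + hdata'

theorem relaxedFunctional_source_estimate (hWx : W xs = hs) (hAh : A hs = ys)
    (hη : η = ContinuousLinearMap.adjoint A v - u)
    (hu : IsSubgrad R xs (ContinuousLinearMap.adjoint W u)) (hv : IsSubgrad N hs η)
    (hRs : R xs ≠ ⊤) (hNs : N hs ≠ ⊤) (hα : 0 < α) (hδ : 0 ≤ δ) (hdata : ‖yδ - ys‖ ≤ δ)
    (hmin : relaxedFunctional W A R N α yδ xad had ≤ relaxedFunctional W A R N α yδ xs hs) :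
    N had ≠ ⊤ ∧
      α * ((N had).toReal - (N hs).toReal - ⟪η, had - hs⟫_ℝ) ≤
        (δ + α * √(‖u‖ ^ 2 + ‖v‖ ^ 2)) ^ 2 / 2 ∧
      ‖A had - ys‖ ≤ 2 * (δ + α * √(‖u‖ ^ 2 + ‖v‖ ^ 2)) := by
  obtain ⟨hNad, hineq⟩ :=
    relaxedFunctional_variational_ineq W A R N hWx hAh hη hu hRs hNs hα hdata hmin
  have hgap : 0 ≤ (N had).toReal - (N hs).toReal - ⟪η, had - hs⟫_ℝ := by
    linarith [hv.toReal_add_inner_le hNs hNad]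
  obtain ⟨hD, hres⟩ := quadratic_source_bound hα.le hδ hgap hineq
  refine ⟨hNad, hD, (norm_sub_le_norm_sub_add_norm_sub _ yδ _).trans (le_trans ?_ hres)⟩
  gcongr

end RelaxedFunctional

namespace HilbertBasis

variable {H : Type*} [NormedAddCommGroup H] [InnerProductSpace ℝ H] {Λ : Type*}
  (φ : HilbertBasis Λ ℝ H)

theorem finite_setOf_le_abs_inner (x : H) {ε : ℝ} (hε : 0 < ε) :
    {l | ε ≤ |⟪φ l, x⟫_ℝ|}.Finite := by
  have hsmall : ∀ᶠ l in cofinite, ⟪x, φ l⟫_ℝ * ⟪φ l, x⟫_ℝ < ε ^ 2 :=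
    (φ.summable_inner_mul_inner x x).tendsto_cofinite_zero.eventually_lt_const (by positivity)
  refine (eventually_cofinite.1 hsmall).subset fun l hl => not_lt.2 ?_
  rw [real_inner_comm, ← sq, ← sq_abs ⟪φ l, x⟫_ℝ]
  exact pow_le_pow_left₀ hε.le hl 2

theorem inner_sub_sum_inner_smul [DecidableEq Λ] (s : Finset Λ) (g : H) (l : Λ) :
    ⟪φ l, g - ∑ j ∈ s, ⟪φ j, g⟫_ℝ • φ j⟫_ℝ = if l ∈ s then 0 else ⟪φ l, g⟫_ℝ := by
  split_ifs with hl
  · rw [inner_sub_right, φ.orthonormal.inner_right_sum _ hl, sub_self]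
  · simp [inner_sub_right, inner_sum, real_inner_smul_right,
      orthonormal_iff_ite.1 φ.orthonormal, hl]

theorem norm_sub_sum_inner_smul_le (s : Finset Λ) (g : H) {b : Λ → ℝ} {B : ℝ}
    (hb : HasSum b B) (hgb : ∀ l ∉ s, |⟪φ l, g⟫_ℝ| ≤ b l) (hb0 : ∀ l ∈ s, 0 ≤ b l) :
    ‖g - ∑ j ∈ s, ⟪φ j, g⟫_ℝ • φ j‖ ≤ B := by
  classical
  refine (φ.hasSum_repr _).norm_le_of_bounded hb fun l => ?_
  rw [norm_smul, φ.orthonormal.1 l, mul_one, φ.repr_apply_apply, Real.norm_eq_abs,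
    φ.inner_sub_sum_inner_smul]
  split_ifs with hl
  · simpa using hb0 l hl
  · exact hgb l hl

/-- Split `g` into its part in `span φ(Ω)`, controlled by `K ‖A ·‖`, and the rest, controlled by
its coordinates off `Ω`. -/
theorem norm_le_of_restricted_inverse {Y : Type*} [NormedAddCommGroup Y] [NormedSpace ℝ Y]
    (A : H →L[ℝ] Y) {K : ℝ} (hK : 0 ≤ K) {Ω : Set Λ} (hΩ : Ω.Finite)
    (hKinv : ∀ f ∈ (Submodule.span ℝ ((fun l => φ l) '' Ω) : Set H), ‖f‖ ≤ K * ‖A f‖)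
    (g : H) {b : Λ → ℝ} {B : ℝ} (hb : HasSum b B) (hgb : ∀ l ∉ Ω, |⟪φ l, g⟫_ℝ| ≤ b l)
    (hb0 : ∀ l ∈ Ω, 0 ≤ b l) :
    ‖g‖ ≤ K * ‖A g‖ + (1 + K * ‖A‖) * B := by
  set P := ∑ j ∈ hΩ.toFinset, ⟪φ j, g⟫_ℝ • φ j
  have hw : ‖g - P‖ ≤ B := φ.norm_sub_sum_inner_smul_le _ g hb
    (fun l hl => hgb l (by simpa using hl)) (fun l hl => hb0 l (by simpa using hl))
  have hP : P ∈ Submodule.span ℝ ((fun l => φ l) '' Ω) :=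
    Submodule.sum_mem _ fun j hj => Submodule.smul_mem _ _
      (Submodule.subset_span ⟨j, hΩ.mem_toFinset.1 hj, rfl⟩)
  calc ‖g‖ ≤ ‖P‖ + ‖g - P‖ := norm_le_insert' g P
    _ ≤ K * (‖A g‖ + ‖A‖ * ‖g - P‖) + ‖g - P‖ := by
        gcongr
        refine (hKinv P hP).trans (mul_le_mul_of_nonneg_left ?_ hK)
        calc ‖A P‖ = ‖A g - A (g - P)‖ := by rw [map_sub, sub_sub_cancel]
          _ ≤ ‖A g‖ + ‖A (g - P)‖ := norm_sub_le _ _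
          _ ≤ ‖A g‖ + ‖A‖ * ‖g - P‖ := by gcongr; exact A.le_opNorm _
    _ = K * ‖A g‖ + (1 + K * ‖A‖) * ‖g - P‖ := by ring
    _ ≤ K * ‖A g‖ + (1 + K * ‖A‖) * B := by gcongr

end HilbertBasis

section WeightedL1

variable {H : Type*} [NormedAddCommGroup H] [InnerProductSpace ℝ H] {Λ : Type*}
  (φ : HilbertBasis Λ ℝ H) (κ : Λ → ℝ)

@[simp]
theorem wNorm1_zero : WNorm1 φ κ 0 = 0 := by
  simp [WNorm1]

theorem wNorm1_add_smul_add (h : H) (t : ℝ) (l : Λ) :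
    WNorm1 φ κ (h + t • φ l) + ENNReal.ofReal (κ l * |⟪φ l, h⟫_ℝ|) =
      WNorm1 φ κ h + ENNReal.ofReal (κ l * |⟪φ l, h⟫_ℝ + t|) := by
  classical
  have hcoord (j : Λ) : ⟪φ j, h + t • φ l⟫_ℝ = ⟪φ j, h⟫_ℝ + if j = l then t else 0 := by
    rw [inner_add_right, real_inner_smul_right, orthonormal_iff_ite.1 φ.orthonormal j l]
    split_ifs <;> simp
  unfold WNorm1
  rw [ENNReal.tsum_eq_add_tsum_ite l, ENNReal.tsum_eq_add_tsum_ite (f := fun j =>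
    ENNReal.ofReal (κ j * |⟪φ j, h⟫_ℝ|)) l]
  simp +contextual only [hcoord, if_true, if_false, add_zero]
  ring

variable {φ κ}

theorem wNorm1_add_smul_toReal (hκ : ∀ l, 0 ≤ κ l) {h : H} (hh : WNorm1 φ κ h ≠ ⊤)
    (t : ℝ) (l : Λ) :
    WNorm1 φ κ (h + t • φ l) ≠ ⊤ ∧
      (WNorm1 φ κ (h + t • φ l)).toReal =
        (WNorm1 φ κ h).toReal + κ l * (|⟪φ l, h⟫_ℝ + t| - |⟪φ l, h⟫_ℝ|) := by
  have heq := wNorm1_add_smul_add φ κ h t l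
  have hfin : WNorm1 φ κ (h + t • φ l) ≠ ⊤ := fun htop => by
    rw [htop, top_add] at heq
    exact ENNReal.add_ne_top.2 ⟨hh, ENNReal.ofReal_ne_top⟩ heq.symm
  refine ⟨hfin, ?_⟩
  have := congrArg ENNReal.toReal heq
  rw [ENNReal.toReal_add hfin ENNReal.ofReal_ne_top, ENNReal.toReal_add hh ENNReal.ofReal_ne_top,
    ENNReal.toReal_ofReal (mul_nonneg (hκ l) (abs_nonneg _)),
    ENNReal.toReal_ofReal (mul_nonneg (hκ l) (abs_nonneg _))] at this
  linarith

theorem hasSum_wNorm1_toReal (hκ : ∀ l, 0 ≤ κ l) {h : H} (hh : WNorm1 φ κ h ≠ ⊤) :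
    HasSum (fun l => κ l * |⟪φ l, h⟫_ℝ|) (WNorm1 φ κ h).toReal := by
  have hsum := ENNReal.hasSum_toReal hh
  rw [← ENNReal.tsum_toReal_eq fun _ => ENNReal.ofReal_ne_top] at hsum
  simpa only [WNorm1, ENNReal.toReal_ofReal (mul_nonneg (hκ _) (abs_nonneg _))] using hsum

variable {hs η : H} (hκ : ∀ l, 0 ≤ κ l) (hv : IsSubgrad (WNorm1 φ κ) hs η)
  (hNs : WNorm1 φ κ hs ≠ ⊤)
include hκ hv hNs

theorem IsSubgrad.wNorm1_mul_inner_le (l : Λ) (t : ℝ) :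
    t * ⟪φ l, η⟫_ℝ ≤ κ l * (|⟪φ l, hs⟫_ℝ + t| - |⟪φ l, hs⟫_ℝ|) := by
  obtain ⟨hfin, heq⟩ := wNorm1_add_smul_toReal hκ hNs t l
  have h := hv.toReal_add_inner_le hNs hfin
  rw [add_sub_cancel_left, real_inner_smul_right, real_inner_comm] at h
  linarith

theorem IsSubgrad.abs_inner_le_weight (l : Λ) : |⟪φ l, η⟫_ℝ| ≤ κ l := by
  have h₁ := hv.wNorm1_mul_inner_le hκ hNs l 1
  have h₂ := hv.wNorm1_mul_inner_le hκ hNs l (-1)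
  have h₃ := abs_add_le ⟪φ l, hs⟫_ℝ 1
  have h₄ := abs_sub ⟪φ l, hs⟫_ℝ 1
  rw [abs_one] at h₃ h₄
  rw [← sub_eq_add_neg] at h₂
  refine abs_le.2 ⟨?_, ?_⟩ <;> nlinarith [hκ l]

theorem IsSubgrad.inner_mul_inner_eq (l : Λ) :
    ⟪φ l, η⟫_ℝ * ⟪φ l, hs⟫_ℝ = κ l * |⟪φ l, hs⟫_ℝ| := by
  have h := hv.wNorm1_mul_inner_le hκ hNs l (-⟪φ l, hs⟫_ℝ)
  rw [add_neg_cancel, abs_zero] at h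
  linarith [mul_le_mul_abs_of_abs_le (y := ⟪φ l, hs⟫_ℝ) (hv.abs_inner_le_weight hκ hNs l)]

theorem IsSubgrad.hasSum_wNorm1_bregman {h : H} (hh : WNorm1 φ κ h ≠ ⊤) :
    HasSum (fun l => κ l * |⟪φ l, h⟫_ℝ| - ⟪φ l, η⟫_ℝ * ⟪φ l, h⟫_ℝ)
      ((WNorm1 φ κ h).toReal - (WNorm1 φ κ hs).toReal - ⟪η, h - hs⟫_ℝ) := by
  have hinner : HasSum (fun l => ⟪φ l, η⟫_ℝ * ⟪φ l, h - hs⟫_ℝ) ⟪η, h - hs⟫_ℝ := by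
    simpa only [real_inner_comm η] using φ.hasSum_inner_mul_inner η (h - hs)
  have hterm (l : Λ) : κ l * |⟪φ l, h⟫_ℝ| - ⟪φ l, η⟫_ℝ * ⟪φ l, h⟫_ℝ =
      κ l * |⟪φ l, h⟫_ℝ| - κ l * |⟪φ l, hs⟫_ℝ| - ⟪φ l, η⟫_ℝ * ⟪φ l, h - hs⟫_ℝ := by
    rw [inner_sub_right, ← hv.inner_mul_inner_eq hκ hNs l]
    ring
  simpa only [hterm] using
    ((hasSum_wNorm1_toReal hκ hh).sub (hasSum_wNorm1_toReal hκ hNs)).sub hinner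

end WeightedL1

section ActiveSet

variable {H : Type*} [NormedAddCommGroup H] [InnerProductSpace ℝ H] {Λ : Type*}
  (φ : HilbertBasis Λ ℝ H) (κ : Λ → ℝ)

/-- The set `Ω[η]` of the paper. -/
def activeSet (η : H) : Set Λ := {l | |⟪φ l, η⟫_ℝ| = κ l}

/-- The margin `m[η]` of the paper; it is `0` when `Ω[η]` is everything. -/
def margin (η : H) : ℝ := sInf ((fun l => κ l - |⟪φ l, η⟫_ℝ|) '' {l | |⟪φ l, η⟫_ℝ| ≠ κ l})

variable {φ κ} {η : H}

theorem activeSet_finite {a : ℝ} (ha : 0 < a) (hκ : ∀ l, a ≤ κ l) (η : H) :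
    (activeSet φ κ η).Finite :=
  (φ.finite_setOf_le_abs_inner η ha).subset fun l hl => (hκ l).trans hl.symm.le

variable (hη : ∀ l, |⟪φ l, η⟫_ℝ| ≤ κ l)
include hη

theorem margin_nonneg : 0 ≤ margin φ κ η :=
  Real.sInf_nonneg <| by
    rintro _ ⟨l, -, rfl⟩
    exact sub_nonneg.2 (hη l)

theorem margin_le {l : Λ} (hl : l ∉ activeSet φ κ η) : margin φ κ η ≤ κ l - |⟪φ l, η⟫_ℝ| :=
  csInf_le ⟨0, by rintro _ ⟨j, -, rfl⟩; exact sub_nonneg.2 (hη j)⟩ ⟨l, hl, rfl⟩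

/-- Off `Ω[η]` the gap `κ_λ - |⟪φ_λ, η⟫|` is at least `a / 2` except at the finitely many `λ`
with `|⟪φ_λ, η⟫| ≥ a / 2`. -/
theorem margin_pos {a : ℝ} (ha : 0 < a) (hκ : ∀ l, a ≤ κ l) {l : Λ}
    (hl : l ∉ activeSet φ κ η) : 0 < margin φ κ η := by
  set gap := fun j => κ j - |⟪φ j, η⟫_ℝ|
  have hgap {j : Λ} (hj : j ∉ activeSet φ κ η) : 0 < gap j := sub_pos.2 ((hη j).lt_of_ne hj)
  set T := insert l {j | a / 2 ≤ |⟪φ j, η⟫_ℝ| ∧ j ∉ activeSet φ κ η}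
  have hT : T.Finite := .insert l <|
    (φ.finite_setOf_le_abs_inner η (half_pos ha)).subset fun j hj => hj.1
  obtain ⟨j₀, hj₀, hmin⟩ := Set.exists_min_image T gap hT ⟨l, Set.mem_insert l _⟩
  have hj₀ : j₀ ∉ activeSet φ κ η := by
    rcases hj₀ with rfl | hj₀
    exacts [hl, hj₀.2]
  refine (lt_min (half_pos ha) (hgap hj₀)).trans_le (le_csInf ⟨_, l, hl, rfl⟩ ?_)
  rintro _ ⟨j, hj, rfl⟩
  by_cases hja : a / 2 ≤ |⟪φ j, η⟫_ℝ|
  · exact (min_le_right _ _).trans (hmin j (Or.inr ⟨hja, hj⟩))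
  · exact (min_le_left _ _).trans (by linarith [hκ j])

theorem abs_inner_le_div_margin {a : ℝ} (ha : 0 < a) (hκ : ∀ l, a ≤ κ l) {l : Λ}
    (hl : l ∉ activeSet φ κ η) (h : H) :
    |⟪φ l, h⟫_ℝ| ≤ (κ l * |⟪φ l, h⟫_ℝ| - ⟪φ l, η⟫_ℝ * ⟪φ l, h⟫_ℝ) / margin φ κ η := by
  rw [le_div_iff₀ (margin_pos hη ha hκ hl)]
  calc |⟪φ l, h⟫_ℝ| * margin φ κ η ≤ |⟪φ l, h⟫_ℝ| * (κ l - |⟪φ l, η⟫_ℝ|) :=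
        mul_le_mul_of_nonneg_left (margin_le hη hl) (abs_nonneg _)
    _ ≤ κ l * |⟪φ l, h⟫_ℝ| - ⟪φ l, η⟫_ℝ * ⟪φ l, h⟫_ℝ := by
        linarith [mul_le_mul_abs_of_abs_le (le_refl |⟪φ l, η⟫_ℝ|) (y := ⟪φ l, h⟫_ℝ)]

end ActiveSet

theorem IsSubgrad.inner_eq_zero_of_notMem_activeSet {H : Type*} [NormedAddCommGroup H]
    [InnerProductSpace ℝ H] {Λ : Type*} {φ : HilbertBasis Λ ℝ H} {κ : Λ → ℝ} {hs η : H}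
    (hκ : ∀ l, 0 ≤ κ l) (hv : IsSubgrad (WNorm1 φ κ) hs η) (hNs : WNorm1 φ κ hs ≠ ⊤) {l : Λ}
    (hl : l ∉ activeSet φ κ η) : ⟪φ l, hs⟫_ℝ = 0 := by
  by_contra hne
  have hlt := mul_lt_mul_of_pos_right ((hv.abs_inner_le_weight hκ hNs l).lt_of_ne hl)
    (abs_pos.2 hne)
  linarith [hv.inner_mul_inner_eq hκ hNs l,
    mul_le_mul_abs_of_abs_le (le_refl |⟪φ l, η⟫_ℝ|) (y := ⟪φ l, hs⟫_ℝ)]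

/-- `K` plays the role of `‖A_{Ω[η]}⁻¹‖`: any bound for the inverse of the restriction of `A`
to `span φ(Ω[η])`, the operator norm being the least one. -/
theorem relaxed_norm_rate_general
    {X H Y : Type*} [NormedAddCommGroup X] [InnerProductSpace ℝ X] [CompleteSpace X]
    [NormedAddCommGroup H] [InnerProductSpace ℝ H] [CompleteSpace H]
    [NormedAddCommGroup Y] [InnerProductSpace ℝ Y] [CompleteSpace Y]
    {Λ : Type*} (φ : HilbertBasis Λ ℝ H)
    (κ : Λ → ℝ) (a : ℝ) (ha : 0 < a) (hκ : ∀ l, a ≤ κ l)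
    (W : X →L[ℝ] H) (A : H →L[ℝ] Y)
    (R : X → ℝ≥0∞) (hRproper : ∃ x, R x ≠ ∞)
    (xstar : X) (hstar : H) (ystar : Y)
    (hWx : W xstar = hstar) (hAh : A hstar = ystar)
    (u : H) (hu : IsSubgrad R xstar (ContinuousLinearMap.adjoint W u))
    (v : Y) (η : H) (hη : η = ContinuousLinearMap.adjoint A v - u)
    (hv : IsSubgrad (WNorm1 φ κ) hstar η)
    (K : ℝ) (hK0 : 0 ≤ K)
    (hKinv : ∀ g ∈
      (Submodule.span ℝ ((fun l => φ l) '' {l : Λ | |⟪φ l, η⟫_ℝ| = κ l}) : Set H),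
      ‖g‖ ≤ K * ‖A g‖)
    (C δ : ℝ) (hC : 0 < C) (hδ : 0 < δ)
    (yδ : Y) (hdata : ‖yδ - ystar‖ ≤ δ)
    (xad : X) (had : H)
    (hmin : ∀ (x : X) (h : H),
      ENNReal.ofReal (‖W xad - had‖ ^ 2 / 2) + ENNReal.ofReal (‖A had - yδ‖ ^ 2 / 2) +
          ENNReal.ofReal (C * δ) * (R xad + WNorm1 φ κ had) ≤
        ENNReal.ofReal (‖W x - h‖ ^ 2 / 2) + ENNReal.ofReal (‖A h - yδ‖ ^ 2 / 2) +
          ENNReal.ofReal (C * δ) * (R x + WNorm1 φ κ h)) :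
    ‖had - hstar‖ ≤
      (2 * K * (1 + C * Real.sqrt (‖u‖ ^ 2 + ‖v‖ ^ 2)) +
        (1 + K * ‖A‖) /
            sInf ((fun l => κ l - |⟪φ l, η⟫_ℝ|) '' {l : Λ | |⟪φ l, η⟫_ℝ| ≠ κ l}) *
          ((1 + C * Real.sqrt (‖u‖ ^ 2 + ‖v‖ ^ 2)) ^ 2 / (2 * C))) * δ := by
  have hκ0 (l : Λ) : 0 ≤ κ l := ha.le.trans (hκ l)
  obtain ⟨x₀, hx₀⟩ := hRproper
  have hNs : WNorm1 φ κ hstar ≠ ⊤ := hv.ne_top (x := 0) (by simp)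
  have hηκ := hv.abs_inner_le_weight hκ0 hNs
  obtain ⟨hNad, hgap, hres⟩ := relaxedFunctional_source_estimate W A R (WNorm1 φ κ) hWx hAh hη
    hu hv (hu.ne_top hx₀) hNs (mul_pos hC hδ) hδ.le hdata (hmin xstar hstar)
  have hbregman := hv.hasSum_wNorm1_bregman hκ0 hNs hNad
  have hsplit := φ.norm_le_of_restricted_inverse A hK0 (activeSet_finite ha hκ η) hKinv
    (had - hstar) (hbregman.div_const (margin φ κ η))
    (fun l hl => by
      rw [inner_sub_right, hv.inner_eq_zero_of_notMem_activeSet hκ0 hNs hl, sub_zero]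
      exact abs_inner_le_div_margin hηκ ha hκ hl had)
    (fun l _ => div_nonneg (sub_nonneg.2 (mul_le_mul_abs_of_abs_le (hηκ l)))
      (margin_nonneg hηκ))
  set β := 1 + C * √(‖u‖ ^ 2 + ‖v‖ ^ 2)
  set D := (WNorm1 φ κ had).toReal - (WNorm1 φ κ hstar).toReal - ⟪η, had - hstar⟫_ℝ
  have hD : D ≤ β ^ 2 / (2 * C) * δ := by
    rw [div_mul_eq_mul_div, le_div_iff₀ (by positivity)]
    nlinarith
  have hm := margin_nonneg hηκ
  calc ‖had - hstar‖ ≤ K * ‖A had - ystar‖ + (1 + K * ‖A‖) * (D / margin φ κ η) := by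
        rwa [map_sub, hAh] at hsplit
    _ ≤ K * (2 * (δ * β)) + (1 + K * ‖A‖) * (β ^ 2 / (2 * C) * δ / margin φ κ η) := by
        gcongr
        linarith
    _ = (2 * K * β + (1 + K * ‖A‖) / margin φ κ η * (β ^ 2 / (2 * C))) * δ := by ring

/-- **Relaxed ℓ¹ co-regularization: linear convergence in norm.**
Under source conditions and restricted injectivity, with `α = Cδ` and `K ≥ 0` a
bound for the inverse of the restriction `A_{Ω[η]}` (the operator norm
`‖A_{Ω[η]}⁻¹‖` is the least such `K`), every minimizer `(xad, had)` of
`B_{α,yδ}` satisfies `‖had - hstar‖ ≤ d δ` with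
`d = 2K(1 + C‖(u,v)‖) + ((1 + K‖A‖)/m[η]) (1 + C‖(u,v)‖)²/(2C)`. -/
theorem relaxed_norm_rate
    {X H Y : Type*} [NormedAddCommGroup X] [InnerProductSpace ℝ X] [CompleteSpace X]
    [TopologicalSpace.SeparableSpace X]
    [NormedAddCommGroup H] [InnerProductSpace ℝ H] [CompleteSpace H]
    [NormedAddCommGroup Y] [InnerProductSpace ℝ Y] [CompleteSpace Y]
    [TopologicalSpace.SeparableSpace Y]
    {Λ : Type*} [Countable Λ] (φ : HilbertBasis Λ ℝ H)
    (κ : Λ → ℝ) (a : ℝ) (ha : 0 < a) (hκ : ∀ l, a ≤ κ l)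
    (W : X →L[ℝ] H) (A : H →L[ℝ] Y)
    (R : X → ℝ≥0∞) (hRproper : ∃ x, R x ≠ ∞) (hRconv : ConvexE R) (hRwlsc : WeakLSC R)
    (hjoint : ∃ x, R x + WNorm1 φ κ (W x) ≠ ∞)
    (xstar : X) (hstar : H) (ystar : Y)
    (hWx : W xstar = hstar) (hAh : A hstar = ystar)
    (u : H) (hu : IsSubgrad R xstar (ContinuousLinearMap.adjoint W u))
    (v : Y) (η : H) (hη : η = ContinuousLinearMap.adjoint A v - u)
    (hv : IsSubgrad (WNorm1 φ κ) hstar η)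
    (hinj : Set.InjOn A (Submodule.span ℝ ((fun l => φ l) ''
      {l : Λ | |⟪φ l, η⟫_ℝ| = κ l}) : Set H))
    (K : ℝ) (hK0 : 0 ≤ K)
    (hKinv : ∀ g ∈
      (Submodule.span ℝ ((fun l => φ l) '' {l : Λ | |⟪φ l, η⟫_ℝ| = κ l}) : Set H),
      ‖g‖ ≤ K * ‖A g‖)
    (C δ : ℝ) (hC : 0 < C) (hδ : 0 < δ)
    (yδ : Y) (hdata : ‖yδ - ystar‖ ≤ δ)
    (xad : X) (had : H)
    (hmin : ∀ (x : X) (h : H),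
      ENNReal.ofReal (‖W xad - had‖ ^ 2 / 2) + ENNReal.ofReal (‖A had - yδ‖ ^ 2 / 2) +
          ENNReal.ofReal (C * δ) * (R xad + WNorm1 φ κ had) ≤
        ENNReal.ofReal (‖W x - h‖ ^ 2 / 2) + ENNReal.ofReal (‖A h - yδ‖ ^ 2 / 2) +
          ENNReal.ofReal (C * δ) * (R x + WNorm1 φ κ h)) :
    ‖had - hstar‖ ≤
      (2 * K * (1 + C * Real.sqrt (‖u‖ ^ 2 + ‖v‖ ^ 2)) +
        (1 + K * ‖A‖) /
            sInf ((fun l => κ l - |⟪φ l, η⟫_ℝ|) '' {l : Λ | |⟪φ l, η⟫_ℝ| ≠ κ l}) *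
          ((1 + C * Real.sqrt (‖u‖ ^ 2 + ‖v‖ ^ 2)) ^ 2 / (2 * C))) * δ :=
  relaxed_norm_rate_general φ κ a ha hκ W A R hRproper xstar hstar ystar hWx hAh u hu v η hη hv K
    hK0 hKinv C δ hC hδ yδ hdata xad had hmin
end
end

section
/- Let X, H, Y be separable real Hilbert spaces, W : X → H and A : H → Y bounded linear, R : X → [0,∞] proper, convex and weakly lower semicontinuous, and (φ_λ)_{λ∈Λ} an orthonormal basis of H with countable Λ. Let (x⋆, h⋆, y⋆) satisfy W x⋆ = h⋆ and A h⋆ = y⋆, and suppose W*u ∈ ∂R(x⋆) for some u ∈ H. Fix C, c₂ > 0 and δ > 0, set α = Cδ, let yδ ∈ Y satisfy ‖yδ − y⋆‖ ≤ δ, and let (xαδ, hαδ) be a minimizer of B_{α,yδ}(x,h) := ½‖W x − h‖² + ½‖A h − yδ‖² + α(R(x) + ‖h‖₁). If ‖hαδ − h⋆‖ ≤ c₂ δ, then ‖W xαδ − hαδ‖ ≤ (2C‖u‖ + c₂) δ. -/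
/-
Compare the minimizer with the competitor `(x⋆, hαδ)`: the data term and the ℓ¹ term cancel, so
with `t = ‖W xαδ - hαδ‖` and `s = ‖hαδ - h⋆‖` we get `t²/2 + α R(xαδ) ≤ s²/2 + α R(x⋆)`.
The source condition `W*u ∈ ∂R(x⋆)` bounds `R(xαδ) - R(x⋆)` from below by
`⟪u, W xαδ - h⋆⟫ ≥ -‖u‖ (t + s)`, hence `t² - s² ≤ 2α‖u‖ (t + s)`, i.e. `t ≤ s + 2α‖u‖`.
-/


open scoped ENNReal InnerProductSpace
open Filter

noncomputable section

/-- The (unweighted) ℓ¹-norm `‖h‖₁ = Σ_λ |⟪φ_λ, h⟫|` with respect to an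
orthonormal basis `φ`. -/
def Norm1 {H : Type*} [NormedAddCommGroup H] [InnerProductSpace ℝ H] {Λ : Type*}
    (φ : HilbertBasis Λ ℝ H) (h : H) : ℝ≥0∞ :=
  ∑' l, ENNReal.ofReal |⟪φ l, h⟫_ℝ|

section Subgradient

variable {X : Type*} [NormedAddCommGroup X] [InnerProductSpace ℝ X]
  {Q : X → ℝ≥0∞} {xs ξ x : X}

theorem IsSubgrad.ne_top_s17 (hQ : IsSubgrad Q xs ξ) (hx : Q x ≠ ∞) : Q xs ≠ ∞ := by
  intro htop
  have h := hQ x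
  rw [htop, EReal.coe_ennreal_top, EReal.top_add_of_ne_bot (EReal.coe_ne_bot _), top_le_iff,
    EReal.coe_ennreal_eq_top_iff] at h
  exact hx h

theorem IsSubgrad.toReal_add_inner_le_s17 (hQ : IsSubgrad Q xs ξ) (hx : Q x ≠ ∞) :
    (Q xs).toReal + ⟪ξ, x - xs⟫_ℝ ≤ (Q x).toReal := by
  have h := hQ x
  rw [← ENNReal.ofReal_toReal (hQ.ne_top_s17 hx), ← ENNReal.ofReal_toReal hx,
    EReal.coe_ennreal_ofReal, EReal.coe_ennreal_ofReal, max_eq_left ENNReal.toReal_nonneg,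
    max_eq_left ENNReal.toReal_nonneg] at h
  exact_mod_cast h

end Subgradient

theorem le_add_two_mul_of_sq_le {t s k : ℝ} (hs : 0 ≤ s) (hk : 0 ≤ k)
    (h : t ^ 2 ≤ s ^ 2 + 2 * k * (t + s)) : t ≤ s + 2 * k := by
  by_contra! hlt
  nlinarith [mul_pos (by linarith : 0 < t - s - 2 * k) (by linarith : 0 < t + s)]

section RelaxedCoregularization

variable {X H Y Λ : Type*} [NormedAddCommGroup X] [InnerProductSpace ℝ X]
  [NormedAddCommGroup H] [InnerProductSpace ℝ H] [NormedAddCommGroup Y] [InnerProductSpace ℝ Y]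
  (φ : HilbertBasis Λ ℝ H) (W : X →L[ℝ] H) (A : H →L[ℝ] Y) (R : X → ℝ≥0∞) (α : ℝ) (yδ : Y)

/-- The relaxed co-regularization functional `B_{α,yδ}`. -/
def coregFunctional (x : X) (h : H) : ℝ≥0∞ :=
  ENNReal.ofReal (‖W x - h‖ ^ 2 / 2) + ENNReal.ofReal (‖A h - yδ‖ ^ 2 / 2) +
    ENNReal.ofReal α * (R x + Norm1 φ h)

variable {φ W A R α yδ}

theorem penalty_ne_top_of_coregFunctional_le {x x₀ : X} {h : H} (hα : 0 < α)
    (hx₀ : R x₀ + Norm1 φ (W x₀) ≠ ∞)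
    (hle : coregFunctional φ W A R α yδ x h ≤ coregFunctional φ W A R α yδ x₀ (W x₀)) :
    R x + Norm1 φ h ≠ ∞ := by
  have hfin : coregFunctional φ W A R α yδ x h ≠ ∞ :=
    ne_top_of_le_ne_top (by simp [coregFunctional, ENNReal.mul_eq_top, hx₀]) hle
  intro htop
  apply hfin
  rw [coregFunctional, htop, ENNReal.mul_top (ENNReal.ofReal_pos.2 hα).ne', add_top]

theorem sq_add_mul_le_of_coregFunctional_le {x x' : X} {h : H} (hα : 0 ≤ α)
    (hx : R x ≠ ∞) (hx' : R x' ≠ ∞) (hh : Norm1 φ h ≠ ∞)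
    (hle : coregFunctional φ W A R α yδ x h ≤ coregFunctional φ W A R α yδ x' h) :
    ‖W x - h‖ ^ 2 / 2 + α * (R x).toReal ≤ ‖W x' - h‖ ^ 2 / 2 + α * (R x').toReal := by
  have hfin : coregFunctional φ W A R α yδ x' h ≠ ∞ := by
    simp [coregFunctional, ENNReal.mul_eq_top, hx', hh]
  have hhalf : ∀ v : ℝ, (ENNReal.ofReal (v ^ 2 / 2)).toReal = v ^ 2 / 2 := fun v =>
    ENNReal.toReal_ofReal (by positivity)
  have := ENNReal.toReal_mono hfin hle
  simp only [coregFunctional, mul_add, ne_eq, ENNReal.add_eq_top, ENNReal.ofReal_ne_top, or_self,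
    not_false_eq_true, ENNReal.mul_eq_top, ENNReal.ofReal_eq_zero, not_le, hx, hx', hh, and_false,
    false_and, ENNReal.toReal_add, ENNReal.toReal_mul, ENNReal.toReal_ofReal hα, hhalf] at this
  linarith

end RelaxedCoregularization

theorem defect_bound_general
    {X H Y : Type*} [NormedAddCommGroup X] [InnerProductSpace ℝ X] [CompleteSpace X]
    [NormedAddCommGroup H] [InnerProductSpace ℝ H] [CompleteSpace H]
    [NormedAddCommGroup Y] [InnerProductSpace ℝ Y]
    {Λ : Type*} (φ : HilbertBasis Λ ℝ H)
    (W : X →L[ℝ] H) (A : H →L[ℝ] Y)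
    (R : X → ℝ≥0∞)
    (hjoint : ∃ x, R x + Norm1 φ (W x) ≠ ∞)
    (xstar : X) (hstar : H)
    (hWx : W xstar = hstar)
    (u : H) (hu : IsSubgrad R xstar (ContinuousLinearMap.adjoint W u))
    (C c₂ δ : ℝ) (hC : 0 < C) (hδ : 0 < δ)
    (yδ : Y)
    (xad : X) (had : H)
    (hmin : ∀ (x : X) (h : H),
      ENNReal.ofReal (‖W xad - had‖ ^ 2 / 2) + ENNReal.ofReal (‖A had - yδ‖ ^ 2 / 2) +
          ENNReal.ofReal (C * δ) * (R xad + Norm1 φ had) ≤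
        ENNReal.ofReal (‖W x - h‖ ^ 2 / 2) + ENNReal.ofReal (‖A h - yδ‖ ^ 2 / 2) +
          ENNReal.ofReal (C * δ) * (R x + Norm1 φ h))
    (hhbound : ‖had - hstar‖ ≤ c₂ * δ) :
    ‖W xad - had‖ ≤ (2 * C * ‖u‖ + c₂) * δ := by
  have hα : 0 < C * δ := mul_pos hC hδ
  obtain ⟨x₀, hx₀⟩ := hjoint
  obtain ⟨hRad, hNad⟩ :=
    ENNReal.add_ne_top.1 (penalty_ne_top_of_coregFunctional_le hα hx₀ (hmin x₀ (W x₀)))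
  have hsub := hu.toReal_add_inner_le_s17 hRad
  have hcompare :=
    sq_add_mul_le_of_coregFunctional_le hα.le hRad (hu.ne_top_s17 hRad) hNad (hmin xstar had)
  rw [ContinuousLinearMap.adjoint_inner_left, map_sub, hWx] at hsub
  rw [hWx, norm_sub_rev hstar had] at hcompare
  have hcs : -(‖u‖ * (‖W xad - had‖ + ‖had - hstar‖)) ≤ ⟪u, W xad - hstar⟫_ℝ :=
    (neg_le_neg (mul_le_mul_of_nonneg_left (norm_sub_le_norm_sub_add_norm_sub _ _ _)
      (norm_nonneg u))).trans (neg_le_of_abs_le (abs_real_inner_le_norm _ _))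
  have hsq : ‖W xad - had‖ ^ 2 ≤
      ‖had - hstar‖ ^ 2 + 2 * (C * δ * ‖u‖) * (‖W xad - had‖ + ‖had - hstar‖) := by
    linarith [mul_le_mul_of_nonneg_left hcs hα.le, mul_le_mul_of_nonneg_left hsub hα.le]
  calc ‖W xad - had‖ ≤ ‖had - hstar‖ + 2 * (C * δ * ‖u‖) :=
        le_add_two_mul_of_sq_le (norm_nonneg _) (by positivity) hsq
    _ ≤ (2 * C * ‖u‖ + c₂) * δ := by linarith

/-- **Defect bound for relaxed ℓ¹ co-regularization.**
If `W*u ∈ ∂R(xstar)`, `(xad, had)` minimizes `B_{α,yδ}` with `α = Cδ`, and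
`‖had - hstar‖ ≤ c₂ δ`, then `‖W xad - had‖ ≤ (2C‖u‖ + c₂) δ`. -/
theorem defect_bound
    {X H Y : Type*} [NormedAddCommGroup X] [InnerProductSpace ℝ X] [CompleteSpace X]
    [TopologicalSpace.SeparableSpace X]
    [NormedAddCommGroup H] [InnerProductSpace ℝ H] [CompleteSpace H]
    [NormedAddCommGroup Y] [InnerProductSpace ℝ Y] [CompleteSpace Y]
    [TopologicalSpace.SeparableSpace Y]
    {Λ : Type*} [Countable Λ] (φ : HilbertBasis Λ ℝ H)
    (W : X →L[ℝ] H) (A : H →L[ℝ] Y)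
    (R : X → ℝ≥0∞) (hRproper : ∃ x, R x ≠ ∞) (hRconv : ConvexE R) (hRwlsc : WeakLSC R)
    (hjoint : ∃ x, R x + Norm1 φ (W x) ≠ ∞)
    (xstar : X) (hstar : H) (ystar : Y)
    (hWx : W xstar = hstar) (hAh : A hstar = ystar)
    (u : H) (hu : IsSubgrad R xstar (ContinuousLinearMap.adjoint W u))
    (C c₂ δ : ℝ) (hC : 0 < C) (hc₂ : 0 < c₂) (hδ : 0 < δ)
    (yδ : Y) (hdata : ‖yδ - ystar‖ ≤ δ)
    (xad : X) (had : H)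
    (hmin : ∀ (x : X) (h : H),
      ENNReal.ofReal (‖W xad - had‖ ^ 2 / 2) + ENNReal.ofReal (‖A had - yδ‖ ^ 2 / 2) +
          ENNReal.ofReal (C * δ) * (R xad + Norm1 φ had) ≤
        ENNReal.ofReal (‖W x - h‖ ^ 2 / 2) + ENNReal.ofReal (‖A h - yδ‖ ^ 2 / 2) +
          ENNReal.ofReal (C * δ) * (R x + Norm1 φ h))
    (hhbound : ‖had - hstar‖ ≤ c₂ * δ) :
    ‖W xad - had‖ ≤ (2 * C * ‖u‖ + c₂) * δ :=
  defect_bound_general φ W A R hjoint xstar hstar hWx u hu C c₂ δ hC hδ yδ xad had hmin hhbound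
end
end
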